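/- Let p be a positive integer, μ > 0, and let Σ̂ be a symmetric p×p real matrix. Then on the convex set of symmetric positive definite p×p matrices Θ with spectral norm ‖Θ‖₂ ≤ 1/√μ, the function Θ ↦ trace(Σ̂Θ) − log det(Θ) − (μ/2)‖Θ‖_F² is convex; in particular, the graphical Lasso loss Θ ↦ trace(Σ̂Θ) − log det(Θ) is strictly convex on this set. -/

import Mathlib

/-! Since the objective `Θ ↦ trace(Σ̂Θ) − log det Θ − (μ/2)‖Θ‖_F²` is continuous, midpoint
convexity suffices; this matters because the spectral bound `‖C‖₂ ≤ 1/√μ` is then only needed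
at the midpoint `C` of the two points `C ± D`. The midpoint inequality amounts to
`μ‖D‖_F² ≤ 2 log det C − log det (C + D) − log det (C − D)`. Writing `D = S X S` with
`S = C^{1/2}` turns `C ± D` into `S (1 ± X) S`; diagonalising `X` with eigenvalues `xᵢ`, the right
side is `−∑ log (1 − xᵢ²) ≥ ∑ xᵢ² = ‖X‖_F²`, while `‖D‖_F ≤ ‖S‖₂² ‖X‖_F = ‖C‖₂ ‖X‖_F`.
Adding back the strictly convex `(μ/2)‖Θ‖_F²` gives strict convexity of the loss. -/

open scoped BigOperators

/-- The spectral norm (largest singular value) of a real `p×p` matrix, realized as the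
operator norm of the induced continuous linear map on Euclidean space. -/
noncomputable def specNorm {p : ℕ} (M : Matrix (Fin p) (Fin p) ℝ) : ℝ :=
  ‖Matrix.toEuclideanCLM (𝕜 := ℝ) M‖

open Set Matrix Real Unitary
open scoped Matrix.Norms.L2Operator MatrixOrder

theorem nonpos_of_midpoint_convex {g : ℝ → ℝ} (hg : ContinuousOn g (Icc 0 1))
    (h₀ : g 0 ≤ 0) (h₁ : g 1 ≤ 0)
    (hmid : ∀ u ∈ Icc (0 : ℝ) 1, ∀ v ∈ Icc (0 : ℝ) 1, g ((u + v) / 2) ≤ (g u + g v) / 2) :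
    ∀ t ∈ Icc (0 : ℝ) 1, g t ≤ 0 := by
  obtain ⟨t₀, ht₀, hmax⟩ := isCompact_Icc.exists_isMaxOn (nonempty_Icc.2 zero_le_one) hg
  by_contra! ⟨t, ht, hgt⟩
  have hM : 0 < g t₀ := hgt.trans_le (hmax ht)
  -- the leftmost maximiser cannot be the midpoint of two points of `[0, 1]`
  have hK : IsCompact (Icc 0 1 ∩ g ⁻¹' {g t₀}) :=
    isCompact_Icc.of_isClosed_subset
      (hg.preimage_isClosed_of_isClosed isClosed_Icc isClosed_singleton) inter_subset_left
  obtain ⟨m, ⟨hm, hgm⟩, hleast⟩ := hK.exists_isLeast ⟨t₀, ht₀, rfl⟩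
  have hm₀ : 0 < m := lt_of_le_of_ne hm.1 (by rintro rfl; simp at hgm; linarith)
  have hm₁ : m < 1 := lt_of_le_of_ne hm.2 (by rintro rfl; simp at hgm; linarith)
  set h := min m (1 - m)
  have hh : 0 < h := lt_min hm₀ (by linarith)
  have hl : m - h ∈ Icc (0 : ℝ) 1 := ⟨by linarith [min_le_left m (1 - m)], by linarith⟩
  have hr : m + h ∈ Icc (0 : ℝ) 1 := ⟨by linarith, by linarith [min_le_right m (1 - m)]⟩
  have hgl : g (m - h) < g t₀ := lt_of_le_of_ne (hmax hl) fun heq =>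
    absurd (hleast ⟨hl, heq⟩) (by linarith)
  have hgr : g (m + h) ≤ g t₀ := hmax hr
  have hmid_m := hmid _ hl _ hr
  rw [show (m - h + (m + h)) / 2 = m by ring, hgm] at hmid_m
  linarith

theorem convexOn_of_midpoint_convex {E : Type*} [AddCommGroup E] [Module ℝ E]
    [TopologicalSpace E] [IsTopologicalAddGroup E] [ContinuousSMul ℝ E] {s : Set E} {f : E → ℝ}
    (hs : Convex ℝ s) (hf : ContinuousOn f s)
    (hmid : ∀ x ∈ s, ∀ y ∈ s, f (midpoint ℝ x y) ≤ (f x + f y) / 2) :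
    ConvexOn ℝ s f := by
  refine ⟨hs, fun x hx y hy a b ha hb hab => ?_⟩
  set γ := AffineMap.lineMap (k := ℝ) x y
  have hγ : ∀ t ∈ Icc (0 : ℝ) 1, γ t ∈ s := fun t ht => hs.lineMap_mem hx hy ht
  have key := nonpos_of_midpoint_convex (g := fun t => f (γ t) - ((1 - t) * f x + t * f y))
    ((hf.comp AffineMap.lineMap_continuous.continuousOn hγ).sub (by fun_prop))
    (by simp [γ]) (by simp [γ])
    (fun u hu v hv => by
      have := hmid _ (hγ u hu) _ (hγ v hv)
      rw [← AffineMap.map_midpoint, midpoint_eq_smul_add, smul_eq_mul, invOf_eq_inv,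
        ← div_eq_inv_mul] at this
      linarith)
    b ⟨hb, by linarith⟩
  rw [show γ b = a • x + b • y by simp [γ, AffineMap.lineMap_apply_module, ← hab]] at key
  simp only [smul_eq_mul]
  rw [← hab] at key
  linarith

namespace Matrix

variable {l m n : Type*} [Fintype l] [Fintype m] [Fintype n]

theorem sum_sq_mul_le_left [DecidableEq m] (M : Matrix l m ℝ) (N : Matrix m n ℝ) :
    ∑ i, ∑ j, (M * N) i j ^ 2 ≤ ‖M‖ ^ 2 * ∑ i, ∑ j, N i j ^ 2 := by
  rw [Finset.sum_comm, Finset.sum_comm (f := fun i j => N i j ^ 2), Finset.mul_sum]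
  refine Finset.sum_le_sum fun j _ => ?_
  have hcol := M.l2_opNorm_mulVec (WithLp.toLp 2 fun k => N k j)
  rw [← sq_le_sq₀ (norm_nonneg _) (mul_nonneg (norm_nonneg _) (norm_nonneg _)), mul_pow,
    EuclideanSpace.real_norm_sq_eq, EuclideanSpace.real_norm_sq_eq] at hcol
  simpa [mul_apply, mulVec, dotProduct] using hcol

theorem sum_sq_transpose (M : Matrix m n ℝ) :
    ∑ i, ∑ j, Mᵀ i j ^ 2 = ∑ i, ∑ j, M i j ^ 2 :=
  Finset.sum_comm

theorem sum_sq_mul_le_right [DecidableEq m] [DecidableEq n] (M : Matrix l m ℝ)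
    (N : Matrix m n ℝ) :
    ∑ i, ∑ j, (M * N) i j ^ 2 ≤ (∑ i, ∑ j, M i j ^ 2) * ‖N‖ ^ 2 := by
  have := sum_sq_mul_le_left Nᵀ Mᵀ
  rwa [← transpose_mul, sum_sq_transpose, sum_sq_transpose,
    ← conjTranspose_eq_transpose_of_trivial, l2_opNorm_conjTranspose, mul_comm] at this

theorem sum_sq_add_add_sum_sq_sub (C D : Matrix m n ℝ) :
    ∑ i, ∑ j, (C + D) i j ^ 2 + ∑ i, ∑ j, (C - D) i j ^ 2 =
      2 * ∑ i, ∑ j, C i j ^ 2 + 2 * ∑ i, ∑ j, D i j ^ 2 := by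
  simp only [Finset.mul_sum, ← Finset.sum_add_distrib, add_apply, sub_apply]
  exact Finset.sum_congr rfl fun i _ => Finset.sum_congr rfl fun j _ => by ring

theorem sum_sq_smul_add_smul (x y : Matrix m n ℝ) {a b : ℝ} (hab : a + b = 1) :
    ∑ i, ∑ j, (a • x + b • y) i j ^ 2 =
      a * ∑ i, ∑ j, x i j ^ 2 + b * ∑ i, ∑ j, y i j ^ 2 - a * b * ∑ i, ∑ j, (x - y) i j ^ 2 := by
  obtain rfl := eq_sub_of_add_eq' hab
  simp only [Finset.mul_sum, ← Finset.sum_add_distrib, ← Finset.sum_sub_distrib, add_apply,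
    sub_apply, smul_apply, smul_eq_mul]
  exact Finset.sum_congr rfl fun i _ => Finset.sum_congr rfl fun j _ => by ring

theorem sum_sq_sub_pos {x y : Matrix m n ℝ} (hxy : x ≠ y) : 0 < ∑ i, ∑ j, (x - y) i j ^ 2 := by
  obtain ⟨i, j, hij⟩ : ∃ i j, x i j ≠ y i j := by
    by_contra! h
    exact hxy (ext h)
  refine Finset.sum_pos' (fun _ _ => by positivity) ⟨i, Finset.mem_univ _, ?_⟩
  exact Finset.sum_pos' (fun _ _ => by positivity)
    ⟨j, Finset.mem_univ _, sq_pos_of_ne_zero (sub_ne_zero.2 hij)⟩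

theorem strictConvexOn_mul_sum_sq {c : ℝ} (hc : 0 < c) {s : Set (Matrix m n ℝ)}
    (hs : Convex ℝ s) : StrictConvexOn ℝ s fun M => c * ∑ i, ∑ j, M i j ^ 2 := by
  refine ⟨hs, fun x _ y _ hxy a b ha hb hab => ?_⟩
  have hgap := mul_pos (mul_pos (mul_pos ha hb) hc) (sum_sq_sub_pos hxy)
  simp only [smul_eq_mul]
  rw [sum_sq_smul_add_smul x y hab]
  linarith

end Matrix

section LogDet

variable {n : Type*} [Fintype n] [DecidableEq n]

theorem Real.log_one_add_add_log_one_sub_le {x : ℝ} (h₁ : 0 < 1 + x) (h₂ : 0 < 1 - x) :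
    log (1 + x) + log (1 - x) ≤ -x ^ 2 := by
  rw [← log_mul h₁.ne' h₂.ne']
  linarith [log_le_sub_one_of_pos (mul_pos h₁ h₂)]

theorem Matrix.IsHermitian.log_det_one_add_add_log_det_one_sub_le {X : Matrix n n ℝ}
    (hX : X.IsHermitian) (h₁ : (1 + X).PosDef) (h₂ : (1 - X).PosDef) :
    log (1 + X).det + log (1 - X).det ≤ -∑ i, ∑ j, X i j ^ 2 := by
  set U := hX.eigenvectorUnitary
  set d := hX.eigenvalues
  let conjU := conjStarAlgAut ℝ (Matrix n n ℝ) U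
  have hXd : X = conjU (diagonal d) := by simpa [conjU] using hX.spectral_theorem
  have hdet (M : Matrix n n ℝ) : (conjU M).det = M.det := by
    rw [conjStarAlgAut_apply, det_mul_right_comm, mul_star_self_of_mem U.2, one_mul]
  have hpos (M : Matrix n n ℝ) : (conjU M).PosDef ↔ M.PosDef := by
    rw [conjStarAlgAut_apply]
    exact IsUnit.posDef_star_right_conjugate_iff isUnit_coe
  have hplus : 1 + X = conjU (diagonal (1 + d)) := by
    rw [hXd, ← map_one conjU, ← map_add, ← diagonal_one, diagonal_add]; rfl
  have hminus : 1 - X = conjU (diagonal (1 - d)) := by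
    rw [hXd, ← map_one conjU, ← map_sub, ← diagonal_one, diagonal_sub]; rfl
  have hfrob : ∑ i, ∑ j, X i j ^ 2 = ∑ i, d i ^ 2 := by
    have hsq : ∑ i, ∑ j, X i j ^ 2 = (X * X).trace := by
      simp only [trace, diag, mul_apply, sq]
      refine Finset.sum_congr rfl fun i _ => Finset.sum_congr rfl fun j _ => ?_
      rw [← hX.apply j i]; rfl
    rw [hsq, hXd, ← map_mul, conjStarAlgAut_apply, trace_mul_cycle, star_mul_self_of_mem U.2,
      one_mul]
    simp [sq]
  rw [hplus, hpos, posDef_diagonal_iff] at h₁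
  rw [hminus, hpos, posDef_diagonal_iff] at h₂
  rw [hplus, hminus, hdet, hdet, det_diagonal, det_diagonal, log_prod (fun i _ => (h₁ i).ne'),
    log_prod (fun i _ => (h₂ i).ne'), hfrob, ← Finset.sum_add_distrib, ← Finset.sum_neg_distrib]
  exact Finset.sum_le_sum fun i _ => log_one_add_add_log_one_sub_le (h₁ i) (h₂ i)

theorem Matrix.PosDef.sum_sq_le_mul_log_det_gap {C D : Matrix n n ℝ} (hC : C.PosDef)
    (hCD₁ : (C + D).PosDef) (hCD₂ : (C - D).PosDef) {r : ℝ} (hr : ‖C‖ ≤ r) :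
    ∑ i, ∑ j, D i j ^ 2 ≤ r ^ 2 * (2 * log C.det - log (C + D).det - log (C - D).det) := by
  set S := CFC.sqrt C
  have hS : S.PosDef := isStrictlyPositive_iff_posDef.1
    (IsStrictlyPositive.sqrt C (isStrictlyPositive_iff_posDef.2 hC))
  have hSS : S * S = C := CFC.sqrt_mul_sqrt_self C hC.posSemidef.nonneg
  have hSstar : star S = S := hS.isHermitian
  have hSdet : IsUnit S.det := (isUnit_iff_isUnit_det S).1 hS.isUnit
  set X := S⁻¹ * D * S⁻¹
  have hSX : S * X * S = D := by
    simp only [X, mul_assoc, nonsing_inv_mul S hSdet, mul_one]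
    rw [← mul_assoc, mul_nonsing_inv S hSdet, one_mul]
  have hplus : C + D = star S * (1 + X) * S := by
    rw [hSstar, mul_add, add_mul, mul_one, hSS, hSX]
  have hminus : C - D = star S * (1 - X) * S := by
    rw [hSstar, mul_sub, sub_mul, mul_one, hSS, hSX]
  have hX₁ : (1 + X).PosDef := (IsUnit.posDef_star_left_conjugate_iff hS.isUnit).1 (hplus ▸ hCD₁)
  have hX₂ : (1 - X).PosDef := (IsUnit.posDef_star_left_conjugate_iff hS.isUnit).1 (hminus ▸ hCD₂)
  have hX : X.IsHermitian := by simpa using hX₁.isHermitian.sub isHermitian_one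
  have hlog {M : Matrix n n ℝ} (hM : M.PosDef) :
      log (star S * M * S).det = log C.det + log M.det := by
    rw [det_mul, det_mul, hSstar, mul_right_comm, ← det_mul, hSS,
      log_mul hC.det_pos.ne' hM.det_pos.ne']
  have hnormS : ‖S‖ ^ 2 = ‖C‖ := by
    rw [sq, ← l2_opNorm_conjTranspose_mul_self, ← star_eq_conjTranspose, hSstar, hSS]
  have hfrob : ∑ i, ∑ j, D i j ^ 2 ≤ ‖C‖ ^ 2 * ∑ i, ∑ j, X i j ^ 2 := by
    calc ∑ i, ∑ j, D i j ^ 2 = ∑ i, ∑ j, (S * (X * S)) i j ^ 2 := by rw [← mul_assoc, hSX]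
      _ ≤ ‖S‖ ^ 2 * ((∑ i, ∑ j, X i j ^ 2) * ‖S‖ ^ 2) :=
        (sum_sq_mul_le_left S (X * S)).trans (by gcongr; exact sum_sq_mul_le_right X S)
      _ = ‖C‖ ^ 2 * ∑ i, ∑ j, X i j ^ 2 := by rw [hnormS]; ring
  have hCr : ‖C‖ ^ 2 ≤ r ^ 2 := pow_le_pow_left₀ (norm_nonneg C) hr 2
  have hgap := hX.log_det_one_add_add_log_det_one_sub_le hX₁ hX₂
  rw [hplus, hminus, hlog hX₁, hlog hX₂]
  have hXnn : 0 ≤ ∑ i, ∑ j, X i j ^ 2 := by positivity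
  nlinarith

end LogDet

theorem convex_setOf_isSymm_posDef_specNorm_le (p : ℕ) (r : ℝ) :
    Convex ℝ {Θ : Matrix (Fin p) (Fin p) ℝ | Θ.IsSymm ∧ Θ.PosDef ∧ specNorm Θ ≤ r} := by
  rintro A ⟨hAs, hA, hAr⟩ B ⟨hBs, hB, hBr⟩ a b ha hb hab
  refine ⟨(hAs.smul a).add (hBs.smul b), ?_, ?_⟩
  · rcases ha.eq_or_lt with rfl | ha
    · simpa [show b = 1 by linarith] using hB
    · exact (hA.smul ha).add_posSemidef (hB.posSemidef.smul hb)
  · have := convex_closedBall (0 : Matrix (Fin p) (Fin p) ℝ) r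
      (mem_closedBall_zero_iff.2 hAr) (mem_closedBall_zero_iff.2 hBr) ha hb hab
    exact (mem_closedBall_zero_iff.1 this : ‖a • A + b • B‖ ≤ r)

theorem glasso_strictly_convex (p : ℕ) (mu : ℝ) (hmu : 0 < mu)
    (Sig : Matrix (Fin p) (Fin p) ℝ) :
    ConvexOn ℝ
      {Θ : Matrix (Fin p) (Fin p) ℝ | Θ.IsSymm ∧ Θ.PosDef ∧ specNorm Θ ≤ 1 / Real.sqrt mu}
      (fun Θ => (Sig * Θ).trace - Real.log Θ.det - mu / 2 * ∑ i, ∑ j, (Θ i j) ^ 2) ∧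
    StrictConvexOn ℝ
      {Θ : Matrix (Fin p) (Fin p) ℝ | Θ.IsSymm ∧ Θ.PosDef ∧ specNorm Θ ≤ 1 / Real.sqrt mu}
      (fun Θ => (Sig * Θ).trace - Real.log Θ.det) := by
  set s := {Θ : Matrix (Fin p) (Fin p) ℝ | Θ.IsSymm ∧ Θ.PosDef ∧ specNorm Θ ≤ 1 / Real.sqrt mu}
  have hs : Convex ℝ s := convex_setOf_isSymm_posDef_specNorm_le p _
  have hconv : ConvexOn ℝ s
      fun Θ => (Sig * Θ).trace - log Θ.det - mu / 2 * ∑ i, ∑ j, Θ i j ^ 2 := by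
    have hcont : ContinuousOn (fun Θ => (Sig * Θ).trace - log Θ.det) s :=
      (continuous_const.matrix_mul continuous_id).matrix_trace.continuousOn.sub
        (continuous_id.matrix_det.continuousOn.log fun Θ hΘ => hΘ.2.1.det_pos.ne')
    refine convexOn_of_midpoint_convex hs (hcont.sub (by fun_prop)) fun A hA B hB => ?_
    obtain ⟨C, D, rfl, rfl⟩ : ∃ C D, A = C + D ∧ B = C - D :=
      ⟨midpoint ℝ A B, A - midpoint ℝ A B, by abel,
        by rw [sub_sub_eq_add_sub, midpoint_add_self, add_sub_cancel_left]⟩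
    have hC : C ∈ s := midpoint_add_sub (R := ℝ) C D ▸ hs.midpoint_mem hA hB
    rw [midpoint_add_sub]
    have hgap := hC.2.1.sum_sq_le_mul_log_det_gap hA.2.1 hB.2.1 hC.2.2
    rw [div_pow, one_pow, sq_sqrt hmu.le, one_div, inv_mul_eq_div, le_div_iff₀' hmu] at hgap
    have htr : (Sig * (C + D)).trace + (Sig * (C - D)).trace = 2 * (Sig * C).trace := by
      rw [mul_add, mul_sub, trace_add, trace_sub]; ring
    linear_combination hgap / 2 - htr / 2 + mu / 4 * sum_sq_add_add_sum_sq_sub C D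
  refine ⟨hconv, (hconv.add_strictConvexOn (strictConvexOn_mul_sum_sq (half_pos hmu) hs)).congr ?_⟩
  intro Θ _
  simp only [Pi.add_apply]
  ring
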